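/- Let ε : Fin 2 → Fin 2 → ℝ be the matrix [[0, 1], [−1, 0]] (ε₀₁ = 1 = −ε₁₀, ε₀₀ = ε₁₁ = 0). Let R : Fin 2 → Fin 2 → Fin 2 → Fin 2 → ℝ (written R^i_{jkl}) satisfy: (i) R^i_{jkl} = −R^i_{jlk}; (ii) R^i_{jkl} + R^i_{klj} + R^i_{ljk} = 0; (iii) the lowered tensor R_{ijkl} := Σ_m ε_{im}·R^m_{jkl} is symmetric in its first two indices, R_{ijkl} = R_{jikl}. Define Ric_{jl} := Σ_k R^k_{jkl}, and raise indices using ε: Ric^{jl} := Σ_{a,b} ε_{ja}·ε_{lb}·Ric_{ab} and R^{ijkl} := Σ_{a,b,c,d} ε_{ia}·ε_{jb}·ε_{kc}·ε_{ld}·R_{abcd}. Then Ric is symmetric (Ric_{jl} = Ric_{lj}) and 2·Σ_{j,l} Ric^{jl}·Ric_{jl} = Σ_{i,j,k,l} R^{ijkl}·R_{ijkl}. -/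
import Mathlib


/-- For a curvature tensor `R^i_{jkl}` of a symplectic connection in dimension two
(antisymmetric in the last two indices, first Bianchi identity, lowered tensor symmetric
in the first two indices), the Ricci tensor is symmetric and
`2·Ric^{jl}Ric_{jl} = R^{ijkl}R_{ijkl}`. -/
theorem stmt16 (ε : Fin 2 → Fin 2 → ℝ)
    (hε : ε = ![![0, 1], ![-1, 0]])
    (R : Fin 2 → Fin 2 → Fin 2 → Fin 2 → ℝ)
    (h1 : ∀ i j k l, R i j k l = -R i j l k)
    (h2 : ∀ i j k l, R i j k l + R i k l j + R i l j k = 0)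
    (Rl : Fin 2 → Fin 2 → Fin 2 → Fin 2 → ℝ)
    (hRl : ∀ i j k l, Rl i j k l = ∑ m, ε i m * R m j k l)
    (h3 : ∀ i j k l, Rl i j k l = Rl j i k l)
    (Ric : Fin 2 → Fin 2 → ℝ)
    (hRic : ∀ j l, Ric j l = ∑ k, R k j k l)
    (Ricup : Fin 2 → Fin 2 → ℝ)
    (hRicup : ∀ j l, Ricup j l = ∑ a, ∑ b, ε j a * ε l b * Ric a b)
    (Rup : Fin 2 → Fin 2 → Fin 2 → Fin 2 → ℝ)
    (hRup : ∀ i j k l, Rup i j k l =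
      ∑ a, ∑ b, ∑ c, ∑ d, ε i a * ε j b * ε k c * ε l d * Rl a b c d) :
    (∀ j l, Ric j l = Ric l j) ∧
    2 * (∑ j, ∑ l, Ricup j l * Ric j l) = ∑ i, ∑ j, ∑ k, ∑ l, Rup i j k l * Rl i j k l := by
  subst hε
  have e0 : ∀ i j, R i j 0 0 = 0 := fun i j => by have := h1 i j 0 0; linarith
  have e1 : ∀ i j, R i j 1 1 = 0 := fun i j => by have := h1 i j 1 1; linarith
  have e2 : ∀ i j, R i j 1 0 = -R i j 0 1 := fun i j => h1 i j 1 0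
  have e3 : R 1 1 0 1 = -R 0 0 0 1 := by
    have := h3 0 1 0 1
    rw [hRl, hRl] at this
    simp [Fin.sum_univ_two] at this
    linarith
  constructor
  · intro j l
    fin_cases j <;> fin_cases l <;>
      simp only [Fin.mk_zero, Fin.mk_one, hRic, Fin.sum_univ_two, e0, e1, e2, e3] <;> ring
  · simp only [hRicup, hRic, hRup, hRl, Fin.sum_univ_two, Matrix.cons_val_zero,
      Matrix.cons_val_one, Matrix.head_cons, e0, e1, e2, e3]
    ring
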